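/- arXiv:1609.04439 — 2 statements merged into one kernel-verified Lean document; each statement's English description precedes it below -/
import Mathlib

section
/- Let m, n ≥ 4. If L' is a regular language with quotient complexity m and L is a left ideal with quotient complexity n (over possibly different alphabets), then κ(L'·L) ≤ m·n + m + n. Moreover, for all m, n ≥ 4 there exist left ideals L' and L, with alphabets satisfying Σ_{L'} \ Σ_L ≠ ∅ and Σ_L \ Σ_{L'} ≠ ∅, of quotient complexities m and n, such that κ(L'·L) = m·n + m + n. -/
/-- The alphabet of a language: letters occurring in some word of `L`. -/
def alphabetOf {α : Type*} (L : Language α) : Set α :=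
  {a | ∃ u v : List α, u ++ [a] ++ v ∈ L}

/-- The left quotient of `L` by a word `w`. -/
def leftQuotient {α : Type*} (L : Language α) (w : List α) : Language α :=
  {x | w ++ x ∈ L}

/-- The set of left quotients of `L` by words over the alphabet of `L`. -/
def quotientSet {α : Type*} (L : Language α) : Set (Language α) :=
  {K | ∃ w : List α, (∀ a ∈ w, a ∈ alphabetOf L) ∧ K = leftQuotient L w}

/-- `L` is regular with quotient complexity `m`: the set of its left quotients
(by words over its own alphabet) is finite of cardinality exactly `m`. -/
def HasComplexity {α : Type*} (L : Language α) (m : ℕ) : Prop :=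
  (quotientSet L).Finite ∧ (quotientSet L).ncard = m

/-- All words whose letters lie in `S`. -/
def starOf {α : Type*} (S : Set α) : Language α :=
  {w | ∀ a ∈ w, a ∈ S}

/-- A nonempty language `L` is a right ideal if `L · Σ_L^* = L`. -/
def IsRightIdeal {α : Type*} (L : Language α) : Prop :=
  (∃ w, w ∈ L) ∧ L * starOf (alphabetOf L) = L

/-- A nonempty language `L` is a left ideal if `Σ_L^* · L = L`. -/
def IsLeftIdeal {α : Type*} (L : Language α) : Prop :=
  (∃ w, w ∈ L) ∧ starOf (alphabetOf L) * L = L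

/-- A nonempty language `L` is a two-sided ideal if `Σ_L^* · L · Σ_L^* = L`. -/
def IsTwoSidedIdeal {α : Type*} (L : Language α) : Prop :=
  (∃ w, w ∈ L) ∧ starOf (alphabetOf L) * L * starOf (alphabetOf L) = L

/-!
The quotient of `L' * L` by `w` is `(w⁻¹L') * L ∪ S`, where `S` is the union of the quotients
`v⁻¹L` over the factorizations `w = u v` with `u ∈ L'`. Quotients of a left ideal grow when the
word is extended on the left, so `S` is the quotient by the longest such `v`, or empty. So each
quotient is determined by a pair in `(Q' ∪ {∅}) × (Q ∪ {∅})`, of size `(m + 1)(n + 1)`, and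
the pairs `(X, ∅)` with `ε ∈ X` do not occur, since `w ∈ L'` forces `L ⊆ S`.

For tightness, `M₁` counts the letters `0` modulo `m - 1` since the last `4` (`1` resets it
and `3` kills it), and `M₂` counts the letters `4` up to `n - 1` (`2` kills it). The product
is recognized by the automaton following `M₁` together with the largest of the runs of `M₂`
started at acceptances of `M₁`. All its `(m + 1)(n + 1)` states except (accepting, dead) are
reachable, and they are pairwise distinguishable: `3` freezes `M₁` and exposes the
`M₂`-component, and the suffix `2 3 4^(n-1)` tests whether the `M₁`-component accepts.
-/

section Quotients

variable {α : Type*}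

theorem mem_alphabetOf_iff {L : Language α} {a : α} :
    a ∈ alphabetOf L ↔ ∃ w ∈ L, a ∈ w := by
  constructor
  · rintro ⟨u, v, h⟩
    exact ⟨_, h, by simp⟩
  · rintro ⟨w, hw, ha⟩
    obtain ⟨u, v, rfl⟩ := List.append_of_mem ha
    exact ⟨u, v, by simpa using hw⟩

theorem mem_starOf_alphabetOf {L : Language α} {w : List α} (hw : w ∈ L) :
    w ∈ starOf (alphabetOf L) :=
  fun _ ha => mem_alphabetOf_iff.2 ⟨w, hw, ha⟩

theorem mem_starOf_alphabetOf_of_append_mem {L : Language α} {v x : List α} (h : v ++ x ∈ L) :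
    v ∈ starOf (alphabetOf L) :=
  fun a ha => mem_starOf_alphabetOf h a (List.mem_append_left x ha)

theorem mem_leftQuotient {L : Language α} {w x : List α} :
    x ∈ leftQuotient L w ↔ w ++ x ∈ L :=
  Iff.rfl

theorem leftQuotient_eq_zero_of_notMem_starOf {L : Language α} {w : List α}
    (hw : w ∉ starOf (alphabetOf L)) : leftQuotient L w = 0 := by
  ext x
  exact iff_of_false (fun hx => hw (mem_starOf_alphabetOf_of_append_mem hx))
    (Language.notMem_zero x)

theorem leftQuotient_mem_insert_zero_quotientSet (L : Language α) (w : List α) :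
    leftQuotient L w ∈ insert 0 (quotientSet L) := by
  by_cases hw : w ∈ starOf (alphabetOf L)
  · exact Or.inr ⟨w, hw, rfl⟩
  · exact Or.inl (leftQuotient_eq_zero_of_notMem_starOf hw)

theorem exists_mem_of_hasComplexity {L : Language α} {m : ℕ} (h : HasComplexity L m)
    (hm : 2 ≤ m) : ∃ w, w ∈ L := by
  by_contra! hL
  have hsub : quotientSet L ⊆ {0} := by
    rintro _ ⟨w, -, rfl⟩
    ext x
    exact iff_of_false (hL _) (Language.notMem_zero x)
  have := Set.ncard_le_ncard hsub
  rw [h.2, Set.ncard_singleton] at this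
  omega

theorem IsLeftIdeal.leftQuotient_le_append {L : Language α} (hL : IsLeftIdeal L)
    {t : List α} (ht : t ∈ starOf (alphabetOf L)) (v : List α) :
    leftQuotient L v ≤ leftQuotient L (t ++ v) := by
  intro x hx
  change t ++ v ++ x ∈ L
  rw [List.append_assoc, ← hL.2]
  exact ⟨t, ht, v ++ x, hx, rfl⟩

theorem isLeftIdeal_of_append_mem {L : Language α} (hne : ∃ w, w ∈ L)
    (h : ∀ u ∈ starOf (alphabetOf L), ∀ v ∈ L, u ++ v ∈ L) : IsLeftIdeal L := by
  refine ⟨hne, le_antisymm ?_ fun w hw => ⟨[], fun _ => by simp, w, hw, rfl⟩⟩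
  rintro _ ⟨u, hu, v, hv, rfl⟩
  exact h u hu v hv

theorem alphabetOf_union_subset_alphabetOf_mul {L' L : Language α} (hL' : ∃ w, w ∈ L')
    (hL : ∃ w, w ∈ L) : alphabetOf L' ∪ alphabetOf L ⊆ alphabetOf (L' * L) := by
  obtain ⟨u, hu⟩ := hL'
  obtain ⟨v, hv⟩ := hL
  rintro a (ha | ha) <;> obtain ⟨w, hw, haw⟩ := mem_alphabetOf_iff.1 ha
  · exact mem_alphabetOf_iff.2 ⟨w ++ v, ⟨w, hw, v, hv, rfl⟩, List.mem_append_left v haw⟩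
  · exact mem_alphabetOf_iff.2 ⟨u ++ w, ⟨u, hu, w, hw, rfl⟩, List.mem_append_right u haw⟩

def suffixQuotient (L' L : Language α) (w : List α) : Language α :=
  {x | ∃ u v, u ++ v = w ∧ u ∈ L' ∧ v ++ x ∈ L}

theorem leftQuotient_mul (L' L : Language α) (w : List α) :
    leftQuotient (L' * L) w = leftQuotient L' w * L + suffixQuotient L' L w := by
  ext x
  rw [Language.mem_add]
  constructor
  · rintro ⟨u, hu, v, hv, he⟩
    rcases List.append_eq_append_iff.1 he with ⟨a, rfl, hx⟩ | ⟨c, hc, rfl⟩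
    · exact Or.inr ⟨u, a, rfl, hu, hx ▸ hv⟩
    · exact Or.inl ⟨c, mem_leftQuotient.2 (hc ▸ hu), v, hv, rfl⟩
  · rintro (⟨c, hc, v, hv, rfl⟩ | ⟨u, v, rfl, hu, hvx⟩)
    · exact ⟨w ++ c, hc, v, hv, by simp⟩
    · exact ⟨u, hu, v ++ x, hvx, by simp⟩

theorem IsLeftIdeal.suffixQuotient_mem {L : Language α} (hL : IsLeftIdeal L) (L' : Language α)
    (w : List α) : suffixQuotient L' L w ∈ insert 0 (quotientSet L) := by
  classical
  by_cases h : ∃ i u v, u ++ v = w ∧ u.length = i ∧ u ∈ L' ∧ v ∈ starOf (alphabetOf L)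
  · -- the shortest admissible prefix `u` leaves the longest suffix `v`, whose quotient
    -- contains the quotients by all other admissible suffixes
    obtain ⟨u, v, huv, hlen, hu, hv⟩ := Nat.find_spec h
    refine Or.inr ⟨v, hv, le_antisymm ?_ fun x hx => ⟨u, v, huv, hu, hx⟩⟩
    rintro x ⟨u', v', huv', hu', hx⟩
    have hmin : u.length ≤ u'.length :=
      hlen ▸ Nat.find_min' h ⟨u', v', huv', rfl, hu', mem_starOf_alphabetOf_of_append_mem hx⟩
    rcases List.append_eq_append_iff.1 (huv.trans huv'.symm) with
      ⟨t, rfl, rfl⟩ | ⟨c, rfl, rfl⟩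
    · exact hL.leftQuotient_le_append (fun a ha => hv a (List.mem_append_left v' ha)) v' hx
    · rw [List.length_append] at hmin
      obtain rfl : c = [] := List.eq_nil_of_length_eq_zero (by omega)
      exact mem_leftQuotient.2 (by simpa using hx)
  · refine Or.inl (le_antisymm ?_ bot_le)
    rintro x ⟨u, v, huv, hu, hx⟩
    exact h ⟨_, u, v, huv, rfl, hu, mem_starOf_alphabetOf_of_append_mem hx⟩

theorem suffixQuotient_ne_zero {L' L : Language α} (hL : ∃ x, x ∈ L) {w : List α}
    (hw : [] ∈ leftQuotient L' w) : suffixQuotient L' L w ≠ 0 := by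
  obtain ⟨x, hx⟩ := hL
  intro h
  have : x ∈ suffixQuotient L' L w :=
    ⟨w, [], by simp, by simpa using mem_leftQuotient.1 hw, hx⟩
  rw [h] at this
  exact Language.notMem_zero x this

theorem quotientSet_mul_subset {L' L : Language α} (hL : IsLeftIdeal L) {X₀ : Language α}
    (hX₀ : [] ∈ X₀) :
    quotientSet (L' * L) ⊆ (fun XY : Language α × Language α => XY.1 * L + XY.2) ''
      ((insert 0 (quotientSet L') ×ˢ insert 0 (quotientSet L)) \ {(X₀, 0)}) := by
  rintro _ ⟨w, -, rfl⟩
  refine ⟨(leftQuotient L' w, suffixQuotient L' L w),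
    ⟨⟨leftQuotient_mem_insert_zero_quotientSet L' w, hL.suffixQuotient_mem L' w⟩, ?_⟩,
    (leftQuotient_mul L' L w).symm⟩
  intro h
  obtain ⟨hX, hY⟩ := Prod.mk.inj (Set.mem_singleton_iff.1 h)
  exact suffixQuotient_ne_zero hL.1 (hX ▸ hX₀) hY

theorem quotientSet_mul_finite_and_ncard_le {L' L : Language α} {m n : ℕ}
    (hL' : HasComplexity L' m) (hL'ne : ∃ w, w ∈ L') (hL : IsLeftIdeal L)
    (hLn : HasComplexity L n) :
    (quotientSet (L' * L)).Finite ∧ (quotientSet (L' * L)).ncard ≤ m * n + m + n := by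
  obtain ⟨w₀, hw₀⟩ := hL'ne
  set X₀ := leftQuotient L' w₀
  have hX₀ : [] ∈ X₀ := mem_leftQuotient.2 (by simpa using hw₀)
  have hQ' := hL'.1.insert 0
  have hQ := hLn.1.insert 0
  have hsub := quotientSet_mul_subset (L' := L') hL hX₀
  have hfin := ((hQ'.prod hQ).sdiff (t := {(X₀, 0)})).image
    (fun XY : Language α × Language α => XY.1 * L + XY.2)
  refine ⟨hfin.subset hsub, ?_⟩
  have hX₀mem :
      (X₀, (0 : Language α)) ∈ insert 0 (quotientSet L') ×ˢ insert 0 (quotientSet L) :=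
    ⟨Or.inr ⟨w₀, mem_starOf_alphabetOf hw₀, rfl⟩, Or.inl rfl⟩
  calc (quotientSet (L' * L)).ncard
      ≤ ((insert 0 (quotientSet L') ×ˢ insert 0 (quotientSet L)) \ {(X₀, 0)}).ncard :=
        (Set.ncard_le_ncard hsub hfin).trans (Set.ncard_image_le ((hQ'.prod hQ).sdiff))
    _ = (insert 0 (quotientSet L')).ncard * (insert 0 (quotientSet L)).ncard - 1 := by
        rw [Set.ncard_sdiff_singleton_of_mem hX₀mem, Set.ncard_prod]
    _ ≤ (m + 1) * (n + 1) - 1 := by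
        gcongr
        · exact hL'.2 ▸ Set.ncard_insert_le _ _
        · exact hLn.2 ▸ Set.ncard_insert_le _ _
    _ = m * n + m + n := by
        rw [show (m + 1) * (n + 1) = m * n + m + n + 1 by ring, Nat.add_sub_cancel]

end Quotients

section Automata

variable {α σ : Type*}

theorem leftQuotient_accepts (M : DFA α σ) (w : List α) :
    leftQuotient M.accepts w = M.acceptsFrom (M.eval w) :=
  Language.leftQuotient_accepts_apply M w

theorem hasComplexity_accepts [Finite σ] {M : DFA α σ} {R : Set σ}
    (hR : M.eval '' starOf (alphabetOf M.accepts) = R) (hinj : Set.InjOn M.acceptsFrom R) :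
    HasComplexity M.accepts R.ncard := by
  have hQ : quotientSet M.accepts = M.acceptsFrom '' R := by
    subst hR
    ext K
    constructor
    · rintro ⟨w, hw, rfl⟩
      exact ⟨M.eval w, ⟨w, hw, rfl⟩, (leftQuotient_accepts M w).symm⟩
    · rintro ⟨_, ⟨w, hw, rfl⟩, rfl⟩
      exact ⟨w, hw, (leftQuotient_accepts M w).symm⟩
  rw [HasComplexity, hQ]
  exact ⟨(Set.toFinite R).image _, hinj.ncard_image⟩

namespace DFA

theorem evalFrom_mem (M : DFA α σ) {S : Set σ} {x : List α}
    (h : ∀ a ∈ x, ∀ s ∈ S, M.step s a ∈ S) {s : σ} (hs : s ∈ S) :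
    M.evalFrom s x ∈ S := by
  induction x generalizing s with
  | nil => exact hs
  | cons a x ih =>
    exact ih (fun b hb => h b (List.mem_cons_of_mem a hb)) (h a List.mem_cons_self s hs)

theorem evalFrom_eq_self (M : DFA α σ) {s : σ} {x : List α} (h : ∀ a ∈ x, M.step s a = s) :
    M.evalFrom s x = s :=
  M.evalFrom_mem (S := {s}) (fun a ha _ ht => (Set.mem_singleton_iff.1 ht) ▸ h a ha) rfl

theorem evalFrom_mono [Preorder σ] {M : DFA α σ} (h : ∀ a, Monotone (M.step · a))
    (x : List α) : Monotone (M.evalFrom · x) := by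
  induction x with
  | nil => exact monotone_id
  | cons a x ih => exact fun s t hst => ih (h a hst)

end DFA

end Automata

section Concat

variable {α σ₁ σ₂ : Type*} [LinearOrder σ₂] [OrderBot σ₂]

open Classical in
/-- An automaton for `M₁.accepts * M₂.accepts` that keeps, instead of the set of states of
all runs of `M₂` started at an acceptance of `M₁`, only the largest of them (`⊥` if there is
none). This is correct when the steps of `M₂` are monotone, `⊥` is a rejecting sink and
acceptance is upward closed (`accepts_concat`). -/
noncomputable def DFA.concat (M₁ : DFA α σ₁) (M₂ : DFA α σ₂) :
    DFA α (σ₁ × σ₂) where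
  step s a := (M₁.step s.1 a,
    if M₁.step s.1 a ∈ M₁.accept then M₂.step s.2 a ⊔ M₂.start else M₂.step s.2 a)
  start := (M₁.start, if M₁.start ∈ M₁.accept then M₂.start else ⊥)
  accept := {s | s.2 ∈ M₂.accept}

namespace DFA

variable (M₁ : DFA α σ₁) (M₂ : DFA α σ₂)

open Classical in
theorem concat_step (s : σ₁ × σ₂) (a : α) : (M₁.concat M₂).step s a = (M₁.step s.1 a,
    if M₁.step s.1 a ∈ M₁.accept then M₂.step s.2 a ⊔ M₂.start else M₂.step s.2 a) :=
  rfl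

open Classical in
theorem concat_start :
    (M₁.concat M₂).start =
      (M₁.start, if M₁.start ∈ M₁.accept then M₂.start else ⊥) :=
  rfl

theorem le_concat_step_snd (s : σ₁ × σ₂) (a : α) :
    M₂.step s.2 a ≤ ((M₁.concat M₂).step s a).2 := by
  rw [concat_step]
  split_ifs
  exacts [le_sup_left, le_rfl]

theorem start_le_concat_step_snd {s : σ₁ × σ₂} {a : α}
    (h : M₁.step s.1 a ∈ M₁.accept) :
    M₂.start ≤ ((M₁.concat M₂).step s a).2 := by
  rw [concat_step, if_pos h]
  exact le_sup_right

theorem concat_step_of_notMem {s : σ₁ × σ₂} {a : α} (h : M₁.step s.1 a ∉ M₁.accept) :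
    (M₁.concat M₂).step s a = (M₁.step s.1 a, M₂.step s.2 a) := by
  rw [concat_step, if_neg h]

theorem concat_step_of_start_le {s : σ₁ × σ₂} {a : α} (h : M₂.start ≤ M₂.step s.2 a) :
    (M₁.concat M₂).step s a = (M₁.step s.1 a, M₂.step s.2 a) := by
  rw [concat_step, sup_eq_left.2 h, ite_self]

theorem concat_evalFrom_fst (s : σ₁ × σ₂) (x : List α) :
    ((M₁.concat M₂).evalFrom s x).1 = M₁.evalFrom s.1 x := by
  induction x generalizing s with
  | nil => rfl
  | cons a x ih => exact ih _

theorem concat_eval_fst (w : List α) : ((M₁.concat M₂).eval w).1 = M₁.eval w :=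
  M₁.concat_evalFrom_fst M₂ _ w

theorem concat_evalFrom_of_sink {s₁ : σ₁} (hstep : ∀ a, M₁.step s₁ a = s₁)
    (hacc : s₁ ∉ M₁.accept) (s₂ : σ₂) (x : List α) :
    (M₁.concat M₂).evalFrom (s₁, s₂) x = (s₁, M₂.evalFrom s₂ x) := by
  induction x generalizing s₂ with
  | nil => rfl
  | cons a x ih =>
    rw [evalFrom_cons, concat_step_of_notMem M₁ M₂ (by rwa [hstep]), hstep, ih]
    rfl

theorem concat_evalFrom_of_start_le {x : List α}
    (hx : ∀ a ∈ x, ∀ s, M₂.start ≤ s → M₂.start ≤ M₂.step s a)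
    (s : σ₁ × σ₂) (hs : M₂.start ≤ s.2) :
    (M₁.concat M₂).evalFrom s x = (M₁.evalFrom s.1 x, M₂.evalFrom s.2 x) := by
  induction x generalizing s with
  | nil => rfl
  | cons a x ih =>
    have ha := hx a List.mem_cons_self s.2 hs
    rw [evalFrom_cons, concat_step_of_start_le M₁ M₂ ha,
      ih (fun b hb => hx b (List.mem_cons_of_mem a hb)) _ ha]
    rfl

theorem start_le_concat_eval_snd {u : List α} (hu : u ∈ M₁.accepts) :
    M₂.start ≤ ((M₁.concat M₂).eval u).2 := by
  rcases List.eq_nil_or_concat' u with rfl | ⟨u, a, rfl⟩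
  · rw [eval_nil, concat_start, if_pos (show M₁.start ∈ M₁.accept from hu)]
  · rw [eval_append_singleton]
    apply start_le_concat_step_snd
    rwa [concat_eval_fst, ← eval_append_singleton]

theorem evalFrom_start_le_concat_eval_snd (hmono : ∀ a, Monotone (M₂.step · a)) {u : List α}
    (hu : u ∈ M₁.accepts) (v : List α) :
    M₂.evalFrom M₂.start v ≤ ((M₁.concat M₂).eval (u ++ v)).2 := by
  induction v using List.reverseRecOn with
  | nil => simpa using M₁.start_le_concat_eval_snd M₂ hu
  | append_singleton v a ih =>
    rw [← List.append_assoc, eval_append_singleton, evalFrom_append_singleton]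
    exact (hmono a ih).trans (le_concat_step_snd M₁ M₂ _ a)

theorem exists_split_of_concat_eval_snd_ne_bot (hbot : ∀ a, M₂.step ⊥ a = ⊥) {w : List α}
    (hw : ((M₁.concat M₂).eval w).2 ≠ ⊥) :
    ∃ u v, u ++ v = w ∧ u ∈ M₁.accepts ∧
      M₂.evalFrom M₂.start v = ((M₁.concat M₂).eval w).2 := by
  induction w using List.reverseRecOn with
  | nil =>
    rw [eval_nil, concat_start] at hw ⊢
    split_ifs at hw ⊢ with h
    · exact ⟨[], [], rfl, h, rfl⟩
    · exact absurd rfl hw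
  | append_singleton w a ih =>
    set s := (M₁.concat M₂).eval w
    have extend (hs : M₂.step s.2 a ≠ ⊥) :
        ∃ u v, u ++ v = w ++ [a] ∧ u ∈ M₁.accepts ∧
          M₂.evalFrom M₂.start v = M₂.step s.2 a := by
      obtain ⟨u, v, rfl, hu, hv⟩ := ih fun h => hs (h ▸ hbot a)
      exact ⟨u, v ++ [a], by simp, hu, by rw [evalFrom_append_singleton, hv]⟩
    rw [eval_append_singleton, concat_step] at hw ⊢
    split_ifs at hw ⊢ with h
    · rcases max_choice (M₂.step s.2 a) M₂.start with hmax | hmax <;> rw [hmax] at hw ⊢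
      · exact extend hw
      · refine ⟨w ++ [a], [], by simp, ?_, rfl⟩
        rwa [mem_accepts, eval_append_singleton, ← concat_eval_fst M₁ M₂]
    · exact extend hw

theorem accepts_concat (hmono : ∀ a, Monotone (M₂.step · a))
    (hbot : ∀ a, M₂.step ⊥ a = ⊥) (hacc : IsUpperSet M₂.accept)
    (hbot_acc : (⊥ : σ₂) ∉ M₂.accept) :
    (M₁.concat M₂).accepts = M₁.accepts * M₂.accepts := by
  ext w
  constructor
  · intro hw
    have hne : ((M₁.concat M₂).eval w).2 ≠ ⊥ :=
      fun h => hbot_acc (h ▸ (mem_accepts _).1 hw)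
    obtain ⟨u, v, rfl, hu, hv⟩ := M₁.exists_split_of_concat_eval_snd_ne_bot M₂ hbot hne
    refine ⟨u, hu, v, ?_, rfl⟩
    change M₂.evalFrom M₂.start v ∈ M₂.accept
    rw [hv]
    exact hw
  · rintro ⟨u, hu, v, hv, rfl⟩
    exact hacc (M₁.evalFrom_start_le_concat_eval_snd M₂ hmono hu v) hv

end DFA

end Concat

namespace LeftIdealProduct

variable {p q : ℕ}

/-- The states are `none` (dead), `some none` (initial) and the counters `some (some r)`,
`r : ZMod p`, of which `-1` accepts. -/
def step₁ (p : ℕ) : Option (Option (ZMod p)) → Fin 5 → Option (Option (ZMod p))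
  | none, _ => none
  | some t, a =>
    if a = 3 then none else if a = 1 then some none else if a = 4 then some (some 0)
    else if a = 0 then some (t.map (· + 1)) else some t

def M₁ (p : ℕ) : DFA (Fin 5) (Option (Option (ZMod p))) where
  step := step₁ p
  start := some none
  accept := {some (some (-1))}

def zeros (p : ℕ) (r : ZMod p) : List (Fin 5) := List.replicate r.val 0

def acceptingWord (p : ℕ) : List (Fin 5) := 4 :: zeros p (-1)

section Steps

variable (t : Option (ZMod p))

@[simp] theorem M₁_step : (M₁ p).step = step₁ p := rfl
@[simp] theorem step₁_three (s : Option (Option (ZMod p))) : step₁ p s 3 = none := by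
  cases s <;> rfl
@[simp] theorem step₁_two (s : Option (Option (ZMod p))) : step₁ p s 2 = s := by
  cases s <;> rfl
@[simp] theorem step₁_one : step₁ p (some t) 1 = some none := rfl
@[simp] theorem step₁_four : step₁ p (some t) 4 = some (some 0) := rfl
@[simp] theorem step₁_zero : step₁ p (some t) 0 = some (t.map (· + 1)) := rfl

end Steps

theorem step₁_some_ne_none {a : Fin 5} (ha : a ≠ 3) (t : Option (ZMod p)) :
    step₁ p (some t) a ≠ none := by
  fin_cases a <;> simp_all [step₁]

theorem mem_M₁_accept {s : Option (Option (ZMod p))} :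
    s ∈ (M₁ p).accept ↔ s = some (some (-1)) :=
  Iff.rfl

@[simp] theorem M₁_evalFrom_none (x : List (Fin 5)) : (M₁ p).evalFrom none x = none :=
  (M₁ p).evalFrom_eq_self fun _ _ => rfl

theorem M₁_evalFrom_eq_none {x : List (Fin 5)} (hx : 3 ∈ x) (s : Option (Option (ZMod p))) :
    (M₁ p).evalFrom s x = none := by
  obtain ⟨u, v, rfl⟩ := List.append_of_mem hx
  rw [DFA.evalFrom_of_append, DFA.evalFrom_cons, M₁_step, step₁_three, M₁_evalFrom_none]

theorem M₁_evalFrom_ne_none {x : List (Fin 5)} (hx : 3 ∉ x) (t : Option (ZMod p)) :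
    (M₁ p).evalFrom (some t) x ≠ none :=
  (M₁ p).evalFrom_mem (S := {s | s ≠ none})
    (fun a ha _ hs => by
      obtain ⟨t', rfl⟩ := Option.ne_none_iff_exists'.1 hs
      exact step₁_some_ne_none (fun h => hx (h ▸ ha)) t')
    (Option.some_ne_none t)

theorem M₁_evalFrom_zeros [NeZero p] (t : Option (ZMod p)) (r : ZMod p) :
    (M₁ p).evalFrom (some t) (zeros p r) = some (t.map (· + r)) := by
  suffices ∀ k : ℕ, (M₁ p).evalFrom (some t) (List.replicate k 0) =
      some (t.map (· + (k : ZMod p))) by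
    rw [zeros, this, ZMod.natCast_zmod_val]
  intro k
  induction k generalizing t with
  | zero => cases t <;> simp
  | succ k ih => cases t <;> simp [List.replicate_succ, ih, add_assoc, add_comm (1 : ZMod p)]

theorem M₁_evalFrom_fours_mem (r : ZMod p) (k : ℕ) :
    (M₁ p).evalFrom (some (some r)) (List.replicate k 4) ∈ Set.range (some ∘ some) :=
  (M₁ p).evalFrom_mem (S := Set.range (some ∘ some))
    (fun a ha _ ⟨_, ht⟩ => ⟨0, by rw [List.eq_of_mem_replicate ha, ← ht]; rfl⟩)
    ⟨r, rfl⟩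

theorem acceptingWord_mem_M₁_acceptsFrom [NeZero p] (t : Option (ZMod p)) :
    acceptingWord p ∈ (M₁ p).acceptsFrom (some t) := by
  simp [acceptingWord, DFA.mem_acceptsFrom, M₁_evalFrom_zeros, mem_M₁_accept]

/-- Each letter either synchronizes the live states or fixes the initial one. -/
theorem M₁_evalFrom_some_eq {x : List (Fin 5)}
    (hx : (M₁ p).evalFrom (some none) x ≠ some none) (t : Option (ZMod p)) :
    (M₁ p).evalFrom (some t) x = (M₁ p).evalFrom (some none) x := by
  induction x generalizing t with
  | nil => exact absurd rfl hx
  | cons a x ih =>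
    simp only [DFA.evalFrom_cons, M₁_step] at hx ⊢
    fin_cases a
    · cases t <;> simp_all
    all_goals simp_all

theorem acceptingWord_mem_M₁_acceptsFrom_iff [NeZero p] (s : Option (Option (ZMod p))) :
    acceptingWord p ∈ (M₁ p).acceptsFrom s ↔ s ≠ none := by
  rcases s with _ | t
  · simp [DFA.mem_acceptsFrom, mem_M₁_accept]
  · simpa using acceptingWord_mem_M₁_acceptsFrom t

theorem zeros_mem_M₁_acceptsFrom_iff [NeZero p] (r : ZMod p) (s : Option (Option (ZMod p))) :
    zeros p (-1 - r) ∈ (M₁ p).acceptsFrom s ↔ s = some (some r) := by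
  rcases s with _ | _ | r'
  · simp [DFA.mem_acceptsFrom, mem_M₁_accept]
  · simp [DFA.mem_acceptsFrom, M₁_evalFrom_zeros, mem_M₁_accept]
  · simp only [DFA.mem_acceptsFrom, M₁_evalFrom_zeros, mem_M₁_accept, Option.map_some,
      Option.some_inj]
    constructor <;> intro h <;> linear_combination h

theorem injective_M₁_acceptsFrom [NeZero p] : Function.Injective (M₁ p).acceptsFrom := by
  intro s s' h
  have hlive : s ≠ none ↔ s' ≠ none := by
    rw [← acceptingWord_mem_M₁_acceptsFrom_iff, h, acceptingWord_mem_M₁_acceptsFrom_iff]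
  have htrack (r : ZMod p) : s = some (some r) ↔ s' = some (some r) := by
    rw [← zeros_mem_M₁_acceptsFrom_iff, h, zeros_mem_M₁_acceptsFrom_iff]
  rcases s with _ | _ | r <;> rcases s' with _ | _ | r' <;> simp_all

theorem alphabetOf_M₁ [NeZero p] : alphabetOf (M₁ p).accepts = {3}ᶜ := by
  ext a
  rw [mem_alphabetOf_iff, Set.mem_compl_singleton_iff]
  constructor
  · rintro ⟨w, hw, ha⟩ rfl
    simp [DFA.mem_accepts, DFA.eval, M₁_evalFrom_eq_none ha, mem_M₁_accept] at hw
  · intro ha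
    refine ⟨a :: acceptingWord p, ?_, List.mem_cons_self⟩
    obtain ⟨t, ht⟩ := Option.ne_none_iff_exists'.1 (step₁_some_ne_none ha none)
    change (M₁ p).evalFrom (step₁ p (some none) a) (acceptingWord p) ∈ (M₁ p).accept
    rw [ht]
    exact acceptingWord_mem_M₁_acceptsFrom t

theorem isLeftIdeal_M₁ [NeZero p] : IsLeftIdeal (M₁ p).accepts := by
  refine isLeftIdeal_of_append_mem ⟨_, acceptingWord_mem_M₁_acceptsFrom none⟩
    fun u hu v hv => ?_
  rw [alphabetOf_M₁] at hu
  obtain ⟨t, ht⟩ :=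
    Option.ne_none_iff_exists'.1 (M₁_evalFrom_ne_none (fun h => hu 3 h rfl) none)
  have hv' : (M₁ p).evalFrom (some none) v = some (some (-1)) := hv
  change (M₁ p).evalFrom (some none) (u ++ v) = some (some (-1))
  rw [DFA.evalFrom_of_append, ht, M₁_evalFrom_some_eq (by simp [hv']), hv']

theorem M₁_eval_image [NeZero p] :
    (M₁ p).eval '' starOf (alphabetOf (M₁ p).accepts) = Set.range some := by
  rw [alphabetOf_M₁]
  ext s
  constructor
  · rintro ⟨w, hw, rfl⟩
    exact Option.ne_none_iff_exists.1 (M₁_evalFrom_ne_none (fun h => hw 3 h rfl) none)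
  · rintro ⟨_ | r, rfl⟩
    · exact ⟨[], fun _ h => absurd h List.not_mem_nil, rfl⟩
    · refine ⟨4 :: zeros p r, fun a ha => ?_, ?_⟩
      · simp only [zeros, List.mem_cons, List.mem_replicate] at ha
        rcases ha with rfl | ⟨-, rfl⟩ <;> decide
      · change (M₁ p).evalFrom (step₁ p (some none) 4) (zeros p r) = _
        simp [M₁_evalFrom_zeros]

theorem hasComplexity_M₁ [NeZero p] : HasComplexity (M₁ p).accepts (p + 1) := by
  have := hasComplexity_accepts (M₁_eval_image (p := p)) injective_M₁_acceptsFrom.injOn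
  rwa [Set.ncard_range_of_injective (Option.some_injective _), Finite.card_option,
    Nat.card_zmod] at this

def bump (q : ℕ) (j : Fin (q + 1)) : Fin (q + 1) := ⟨min (j + 1) q, by omega⟩

/-- `⊥` is dead and `↑j` records that `j` letters `4` (at least `q` if `j = q`) have been
read. -/
def step₂ (q : ℕ) (o : WithBot (Fin (q + 1))) (a : Fin 5) : WithBot (Fin (q + 1)) :=
  if a = 2 then ⊥ else if a = 4 then o.map (bump q) else o

def M₂ (q : ℕ) : DFA (Fin 5) (WithBot (Fin (q + 1))) where
  step := step₂ q
  start := ↑(0 : Fin (q + 1))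
  accept := {↑(Fin.last q)}

@[simp] theorem M₂_step : (M₂ q).step = step₂ q := rfl
@[simp] theorem step₂_two (o : WithBot (Fin (q + 1))) : step₂ q o 2 = ⊥ := rfl
theorem step₂_bot (a : Fin 5) : step₂ q ⊥ a = ⊥ := by
  unfold step₂; split_ifs <;> rfl
theorem step₂_four_coe (j : Fin (q + 1)) : step₂ q j 4 = ↑(bump q j) := rfl

theorem step₂_of_ne {a : Fin 5} (ha₂ : a ≠ 2) (ha₄ : a ≠ 4) (o : WithBot (Fin (q + 1))) :
    step₂ q o a = o := by
  simp [step₂, ha₂, ha₄]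

theorem mem_M₂_accept {o : WithBot (Fin (q + 1))} :
    o ∈ (M₂ q).accept ↔ o = ↑(Fin.last q) :=
  Iff.rfl

theorem monotone_step₂ (a : Fin 5) : Monotone (step₂ q · a) := by
  intro o o' h
  unfold step₂
  split_ifs
  · exact le_rfl
  · refine Monotone.withBot_map (fun i j hij => Fin.le_def.2 ?_) h
    have := Fin.le_def.1 hij
    simp only [bump]
    omega
  · exact h

theorem start_le_step₂ {a : Fin 5} (ha : a ≠ 2) {o : WithBot (Fin (q + 1))}
    (ho : (M₂ q).start ≤ o) : (M₂ q).start ≤ step₂ q o a := by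
  induction o using WithBot.recBotCoe with
  | bot => exact absurd ho (WithBot.coe_ne_bot ∘ le_bot_iff.1)
  | coe j =>
    unfold step₂
    split_ifs with h₂
    · exact absurd h₂ ha
    · exact WithBot.coe_le_coe.2 (Fin.zero_le _)
    · exact ho

@[simp] theorem M₂_evalFrom_bot (x : List (Fin 5)) : (M₂ q).evalFrom ⊥ x = ⊥ :=
  (M₂ q).evalFrom_eq_self fun a _ => step₂_bot a

theorem M₂_evalFrom_fours (j : Fin (q + 1)) (k : ℕ) :
    (M₂ q).evalFrom j (List.replicate k 4) =
      ↑(⟨min (j + k) q, by omega⟩ : Fin (q + 1)) := by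
  induction k generalizing j with
  | zero => simp [Nat.min_eq_left (Nat.le_of_lt_succ j.2)]
  | succ k ih =>
    rw [List.replicate_succ, DFA.evalFrom_cons, M₂_step, step₂_four_coe, ih]
    simp only [bump, WithBot.coe_inj, Fin.mk.injEq]
    omega

theorem M₂_evalFrom_zeros (o : WithBot (Fin (q + 1))) (r : ZMod p) :
    (M₂ q).evalFrom o (zeros p r) = o :=
  (M₂ q).evalFrom_eq_self fun a ha => by
    rw [List.eq_of_mem_replicate ha]
    exact step₂_of_ne (a := 0) (by decide) (by decide) o

theorem fours_mem_M₂_acceptsFrom_iff (j : Fin (q + 1)) (o : WithBot (Fin (q + 1))) :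
    List.replicate (q - j) 4 ∈ (M₂ q).acceptsFrom o ↔ ↑j ≤ o := by
  induction o using WithBot.recBotCoe with
  | bot => simp [DFA.mem_acceptsFrom, mem_M₂_accept]
  | coe i =>
    simp only [DFA.mem_acceptsFrom, M₂_evalFrom_fours, mem_M₂_accept, WithBot.coe_inj,
      WithBot.coe_le_coe, Fin.ext_iff, Fin.le_def, Fin.val_last]
    omega

theorem injective_M₂_acceptsFrom : Function.Injective (M₂ q).acceptsFrom := by
  intro o o' h
  have hle (j : Fin (q + 1)) : ↑j ≤ o ↔ ↑j ≤ o' := by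
    rw [← fours_mem_M₂_acceptsFrom_iff, h, fours_mem_M₂_acceptsFrom_iff]
  induction o using WithBot.recBotCoe with
  | bot =>
    induction o' using WithBot.recBotCoe with
    | bot => rfl
    | coe j => simpa using (hle j).2 le_rfl
  | coe i =>
    obtain ⟨j, rfl, hij⟩ := WithBot.coe_le_iff.1 ((hle i).1 le_rfl)
    exact le_antisymm (WithBot.coe_le_coe.2 hij) ((hle j).2 le_rfl)

theorem isUpperSet_M₂_accept : IsUpperSet (M₂ q).accept := by
  rintro o o' h rfl
  obtain ⟨j, rfl, hj⟩ := WithBot.coe_le_iff.1 h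
  exact congrArg _ (le_antisymm (Fin.le_last j) hj)

theorem M₂_start_le_evalFrom {x : List (Fin 5)} (hx : 2 ∉ x) {o : WithBot (Fin (q + 1))}
    (ho : (M₂ q).start ≤ o) : (M₂ q).start ≤ (M₂ q).evalFrom o x :=
  (M₂ q).evalFrom_mem (S := Set.Ici (M₂ q).start)
    (fun _ ha _ hs => start_le_step₂ (fun h => hx (h ▸ ha)) hs) ho

theorem fours_mem_M₂_acceptsFrom {o : WithBot (Fin (q + 1))} (ho : (M₂ q).start ≤ o) :
    List.replicate q 4 ∈ (M₂ q).acceptsFrom o := by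
  simpa using (fours_mem_M₂_acceptsFrom_iff 0 o).2 ho

theorem alphabetOf_M₂ : alphabetOf (M₂ q).accepts = {2}ᶜ := by
  ext a
  rw [mem_alphabetOf_iff, Set.mem_compl_singleton_iff]
  constructor
  · rintro ⟨w, hw, ha⟩ rfl
    obtain ⟨u, v, rfl⟩ := List.append_of_mem ha
    have : (M₂ q).eval (u ++ 2 :: v) = ⊥ := by
      simp [DFA.eval, DFA.evalFrom_of_append]
    exact WithBot.bot_ne_coe (this.symm.trans hw)
  · intro ha
    exact ⟨a :: List.replicate q 4, fours_mem_M₂_acceptsFrom (start_le_step₂ ha le_rfl),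
      List.mem_cons_self⟩

theorem isLeftIdeal_M₂ : IsLeftIdeal (M₂ q).accepts := by
  refine isLeftIdeal_of_append_mem ⟨_, fours_mem_M₂_acceptsFrom le_rfl⟩ fun u hu v hv => ?_
  rw [alphabetOf_M₂] at hu
  have hstart := M₂_start_le_evalFrom (fun h => hu 2 h rfl) (le_refl (M₂ q).start)
  rw [DFA.mem_accepts, DFA.eval, DFA.evalFrom_of_append]
  exact isUpperSet_M₂_accept ((M₂ q).evalFrom_mono monotone_step₂ v hstart) hv

theorem M₂_eval_image :
    (M₂ q).eval '' starOf (alphabetOf (M₂ q).accepts) = Set.range WithBot.some := by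
  rw [alphabetOf_M₂]
  ext o
  constructor
  · rintro ⟨w, hw, rfl⟩
    obtain ⟨j, hj, -⟩ :=
      WithBot.coe_le_iff.1 (M₂_start_le_evalFrom (fun h => hw 2 h rfl) le_rfl)
    exact ⟨j, hj.symm⟩
  · rintro ⟨j, rfl⟩
    refine ⟨List.replicate j 4, fun a ha => by simp [List.eq_of_mem_replicate ha], ?_⟩
    change (M₂ q).evalFrom ↑(0 : Fin (q + 1)) _ = _
    rw [M₂_evalFrom_fours]
    simp [Nat.min_eq_left (Nat.le_of_lt_succ j.2)]

theorem hasComplexity_M₂ : HasComplexity (M₂ q).accepts (q + 1) := by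
  have := hasComplexity_accepts (M₂_eval_image (q := q)) injective_M₂_acceptsFrom.injOn
  rwa [Set.ncard_range_of_injective WithBot.coe_injective, Nat.card_fin] at this

noncomputable abbrev M₁₂ (p q : ℕ) :
    DFA (Fin 5) (Option (Option (ZMod p)) × WithBot (Fin (q + 1))) :=
  (M₁ p).concat (M₂ q)

theorem accepts_M₁₂ : (M₁₂ p q).accepts = (M₁ p).accepts * (M₂ q).accepts :=
  DFA.accepts_concat _ _ monotone_step₂ step₂_bot isUpperSet_M₂_accept
    (fun h => WithBot.bot_ne_coe (mem_M₂_accept.1 h))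

theorem M₁₂_step_three (s : Option (Option (ZMod p)) × WithBot (Fin (q + 1))) :
    (M₁₂ p q).step s 3 = (none, s.2) := by
  rw [DFA.concat_step_of_notMem _ _ (by simp [mem_M₁_accept])]
  simp [step₂_of_ne]

theorem M₁₂_step_one (t : Option (ZMod p)) (o : WithBot (Fin (q + 1))) :
    (M₁₂ p q).step (some t, o) 1 = (some none, o) := by
  rw [DFA.concat_step_of_notMem _ _ (by simp [mem_M₁_accept])]
  simp [step₂_of_ne]

theorem M₁₂_step_two (s : Option (Option (ZMod p)) × WithBot (Fin (q + 1))) :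
    (M₁₂ p q).step s 2 =
      (s.1, if s.1 = some (some (-1)) then ↑(0 : Fin (q + 1)) else ⊥) := by
  rw [DFA.concat_step]
  simp only [M₁_step, step₁_two, M₂_step, step₂_two, bot_sup_eq, mem_M₁_accept]
  rfl

theorem M₁₂_evalFrom_none (o : WithBot (Fin (q + 1))) (x : List (Fin 5)) :
    (M₁₂ p q).evalFrom (none, o) x = (none, (M₂ q).evalFrom o x) :=
  DFA.concat_evalFrom_of_sink _ _ (fun _ => rfl) (by simp [mem_M₁_accept]) o x

theorem three_cons_mem_M₁₂_acceptsFrom_iff (x : List (Fin 5))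
    (s : Option (Option (ZMod p)) × WithBot (Fin (q + 1))) :
    3 :: x ∈ (M₁₂ p q).acceptsFrom s ↔ x ∈ (M₂ q).acceptsFrom s.2 := by
  rw [DFA.mem_acceptsFrom, DFA.evalFrom_cons, M₁₂_step_three, M₁₂_evalFrom_none]
  rfl

/-- `2` restarts the count of `M₂` at the accepting state of `M₁` and kills it elsewhere;
`3` then freezes `M₁`. -/
theorem append_mem_M₁₂_acceptsFrom_iff (x : List (Fin 5))
    (s : Option (Option (ZMod p)) × WithBot (Fin (q + 1))) :
    x ++ 2 :: 3 :: List.replicate q 4 ∈ (M₁₂ p q).acceptsFrom s ↔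
      x ∈ (M₁ p).acceptsFrom s.1 := by
  rw [DFA.mem_acceptsFrom, DFA.evalFrom_of_append, DFA.evalFrom_cons, M₁₂_step_two,
    ← DFA.mem_acceptsFrom, three_cons_mem_M₁₂_acceptsFrom_iff, DFA.concat_evalFrom_fst,
    DFA.mem_acceptsFrom (s := s.1), mem_M₁_accept]
  split_ifs with h
  · exact iff_of_true (fours_mem_M₂_acceptsFrom le_rfl) h
  · simp [h, DFA.mem_acceptsFrom, mem_M₂_accept]

theorem injective_M₁₂_acceptsFrom [NeZero p] :
    Function.Injective (M₁₂ p q).acceptsFrom := by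
  intro s s' h
  refine Prod.ext (injective_M₁_acceptsFrom ?_) (injective_M₂_acceptsFrom ?_) <;> ext x
  · rw [← append_mem_M₁₂_acceptsFrom_iff, h, append_mem_M₁₂_acceptsFrom_iff]
  · rw [← three_cons_mem_M₁₂_acceptsFrom_iff, h, three_cons_mem_M₁₂_acceptsFrom_iff]

theorem M₁₂_eval_acceptingWord_two [NeZero p] :
    (M₁₂ p q).eval (acceptingWord p ++ [2]) = (some (some (-1)), ↑(0 : Fin (q + 1))) := by
  have hW : (M₁ p).eval (acceptingWord p) = some (some (-1)) :=
    acceptingWord_mem_M₁_acceptsFrom none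
  rw [DFA.eval_append_singleton, M₁₂_step_two, DFA.concat_eval_fst, hW, if_pos rfl]

theorem mem_range_M₁₂_eval_track [NeZero p] (r : ZMod p) (j : Fin (q + 1)) :
    (some (some r), ↑j) ∈ Set.range (M₁₂ p q).eval := by
  obtain ⟨t, ht⟩ := M₁_evalFrom_fours_mem (p := p) (-1) j
  refine ⟨acceptingWord p ++ [2] ++ (List.replicate j 4 ++ zeros p (r - t)), ?_⟩
  have hx : ∀ a ∈ List.replicate j 4 ++ zeros p (r - t), a ≠ 2 := by
    simp only [zeros, List.mem_append, List.mem_replicate]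
    rintro a (⟨-, rfl⟩ | ⟨-, rfl⟩) <;> decide
  rw [DFA.eval, DFA.evalFrom_of_append, ← DFA.eval, M₁₂_eval_acceptingWord_two,
    DFA.concat_evalFrom_of_start_le _ _ (fun a ha _ => start_le_step₂ (hx a ha)) _ le_rfl]
  simp only [DFA.evalFrom_of_append, ← ht, Function.comp_apply, M₁_evalFrom_zeros,
    Option.map_some, M₂_evalFrom_zeros, M₂_evalFrom_fours]
  simp [Nat.min_eq_left (Nat.le_of_lt_succ j.2)]

theorem range_M₁₂_eval [NeZero p] :
    Set.range (M₁₂ p q).eval = {(some (some (-1)), ⊥)}ᶜ := by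
  refine Set.Subset.antisymm ?_ fun s hs => ?_
  · rintro _ ⟨w, rfl⟩ h
    have hw : w ∈ (M₁ p).accepts := by
      rw [DFA.mem_accepts, ← DFA.concat_eval_fst _ (M₂ q), Set.mem_singleton_iff.1 h]
      rfl
    have := DFA.start_le_concat_eval_snd _ (M₂ q) hw
    rw [Set.mem_singleton_iff.1 h] at this
    exact WithBot.coe_ne_bot (le_bot_iff.1 this)
  have step_mem (s a) (hs : s ∈ Set.range (M₁₂ p q).eval) :
      (M₁₂ p q).step s a ∈ Set.range (M₁₂ p q).eval := by
    obtain ⟨w, rfl⟩ := hs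
    exact ⟨w ++ [a], DFA.eval_append_singleton _ _ _⟩
  have init (o : WithBot (Fin (q + 1))) : (some none, o) ∈ Set.range (M₁₂ p q).eval := by
    induction o using WithBot.recBotCoe with
    | bot =>
      have : (M₁ p).start ∉ (M₁ p).accept := by simp [M₁]
      exact ⟨[], by rw [DFA.eval_nil, DFA.concat_start, if_neg this]; rfl⟩
    | coe j => simpa [M₁₂_step_one] using step_mem _ 1 (mem_range_M₁₂_eval_track 0 j)
  obtain ⟨_ | _ | r, o⟩ := s
  · simpa [M₁₂_step_three] using step_mem _ 3 (init o)
  · exact init o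
  · induction o using WithBot.recBotCoe with
    | bot =>
      have hr : r ≠ -1 := fun h => hs (by rw [h]; rfl)
      simpa [M₁₂_step_two, hr] using step_mem _ 2 (mem_range_M₁₂_eval_track r 0)
    | coe j => exact mem_range_M₁₂_eval_track r j

theorem hasComplexity_M₁_mul_M₂ [NeZero p] :
    HasComplexity ((M₁ p).accepts * (M₂ q).accepts)
      ((p + 1) * (q + 1) + (p + 1) + (q + 1)) := by
  have hall (a : Fin 5) : a ∈ alphabetOf (M₁₂ p q).accepts := by
    rw [accepts_M₁₂]
    apply alphabetOf_union_subset_alphabetOf_mul isLeftIdeal_M₁.1 isLeftIdeal_M₂.1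
    rw [alphabetOf_M₁, alphabetOf_M₂]
    by_cases a = 3 <;> simp_all
  have hR : (M₁₂ p q).eval '' starOf (alphabetOf (M₁₂ p q).accepts) =
      {(some (some (-1)), ⊥)}ᶜ := by
    rw [← range_M₁₂_eval]
    ext s
    exact ⟨fun ⟨w, _, hw⟩ => ⟨w, hw⟩, fun ⟨w, hw⟩ => ⟨w, fun a _ => hall a, hw⟩⟩
  have := hasComplexity_accepts hR injective_M₁₂_acceptsFrom.injOn
  have hcard : Nat.card (WithBot (Fin (q + 1))) = q + 1 + 1 :=
    (Finite.card_option (α := Fin (q + 1))).trans (by rw [Nat.card_fin])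
  rw [accepts_M₁₂, Set.ncard_compl, Set.ncard_singleton, Nat.card_prod, Finite.card_option,
    Finite.card_option, Nat.card_zmod, hcard] at this
  convert this using 1
  rw [show (p + 1 + 1) * (q + 1 + 1) = (p + 1) * (q + 1) + (p + 1) + (q + 1) + 1 by ring,
    Nat.add_sub_cancel]

end LeftIdealProduct

/-- product of a regular language with a left ideal: upper bound
`m·n + m + n`, and tightness by left ideals over incomparable alphabets. -/
theorem left_ideal_product (m n : ℕ) (hm : 4 ≤ m) (hn : 4 ≤ n) :
    (∀ (α : Type) (L' L : Language α), HasComplexity L' m →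
      IsLeftIdeal L → HasComplexity L n →
      (quotientSet (L' * L)).Finite ∧
        (quotientSet (L' * L)).ncard ≤ m * n + m + n) ∧
    (∃ L' L : Language (Fin 5), IsLeftIdeal L' ∧ IsLeftIdeal L ∧
      (alphabetOf L' \ alphabetOf L).Nonempty ∧
      (alphabetOf L \ alphabetOf L').Nonempty ∧
      HasComplexity L' m ∧ HasComplexity L n ∧
      HasComplexity (L' * L) (m * n + m + n)) := by
  refine ⟨fun α L' L hL' hL hLn => quotientSet_mul_finite_and_ncard_le hL'
    (exists_mem_of_hasComplexity hL' (by omega)) hL hLn, ?_⟩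
  obtain ⟨p, rfl⟩ : ∃ p, m = p + 1 := ⟨m - 1, by omega⟩
  obtain ⟨q, rfl⟩ : ∃ q, n = q + 1 := ⟨n - 1, by omega⟩
  have : NeZero p := ⟨by omega⟩
  open LeftIdealProduct in
  exact ⟨(M₁ p).accepts, (M₂ q).accepts, isLeftIdeal_M₁, isLeftIdeal_M₂,
    ⟨2, by simp [alphabetOf_M₁, alphabetOf_M₂]⟩,
    ⟨3, by simp [alphabetOf_M₁, alphabetOf_M₂]⟩,
    hasComplexity_M₁, hasComplexity_M₂, hasComplexity_M₁_mul_M₂⟩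
end

section
/- For all m, n ≥ 4: (1) there exist left ideals L' and L with quotient complexities m and n, with Σ_{L'} \ Σ_L ≠ ∅ and Σ_L \ Σ_{L'} ≠ ∅, such that κ(L' ∪ L) = (m+1)(n+1) and κ(L' ⊕ L) = (m+1)(n+1); (2) there exist left ideals L' and L with quotient complexities m and n, with Σ_{L'} \ Σ_L ≠ ∅, such that κ(L' \ L) = m·n + m; and (3) there exist left ideals L' and L with quotient complexities m and n such that κ(L' ∩ L) = m·n. (Thus the unrestricted complexities of boolean operations on left ideals equal those on arbitrary regular languages.) -/
/-!
Take `L' = {w ∈ {0,1,2}^* : |w|₀ ≥ m - 1}` and `L = {w ∈ {0,1,3}^* : |w|₁ ≥ n - 1}`. A quotient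
of `L'` only records how many zeros are still missing (`0, …, m - 1`), or that a letter outside
`{0,1,2}` was read (the empty quotient); similarly for `L`. Left quotients commute with boolean
operations, so a quotient of `L' ∘ L` (`∘` boolean) is determined by this pair of states. Every
pair allowed by the alphabet of `L' ∘ L` is reached (the letter `2` empties `L`, the letter `3`
empties `L'`), and distinct pairs give distinct quotients, told apart by the words `0ⁱ2` and
`1ʲ3`, `0^(m-1) 1ʲ` for `L' \ L` and `0ˢ1ᵗ` for `L' ∩ L`. The counts are `(m+1)(n+1)` pairs
over `{0,1,2,3}`, `m(n+1)` over `{0,1,2}` and `mn` over `{0,1}`.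
-/

theorem eq_of_forall_le_and_le_iff {M r r' : ℕ} (hr : r ≤ M + 1) (hr' : r' ≤ M + 1)
    (h : ∀ i, r ≤ M ∧ r ≤ i ↔ r' ≤ M ∧ r' ≤ i) : r = r' := by
  have := h r
  have := h r'
  omega

section Languages

variable {α : Type*}

@[simp] theorem mem_starOf {S : Set α} {w : List α} : w ∈ starOf S ↔ ∀ a ∈ w, a ∈ S :=
  Iff.rfl

theorem Language.mem_sdiff {X Y : Language α} {x : List α} : x ∈ X \ Y ↔ x ∈ X ∧ x ∉ Y :=
  Iff.rfl

theorem Language.mem_sdiff_sup_sdiff {X Y : Language α} {x : List α} :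
    x ∈ X \ Y ⊔ Y \ X ↔ (x ∈ X ∧ x ∉ Y) ∨ (x ∈ Y ∧ x ∉ X) :=
  Iff.rfl

theorem append_mem_starOf {S : Set α} {u v : List α} :
    u ++ v ∈ starOf S ↔ u ∈ starOf S ∧ v ∈ starOf S :=
  List.forall_mem_append

theorem replicate_mem_starOf {S : Set α} {a : α} (ha : a ∈ S) (k : ℕ) :
    List.replicate k a ∈ starOf S :=
  fun _ h => (List.eq_of_mem_replicate h) ▸ ha

theorem mem_alphabetOf_of_mem {L : Language α} {w : List α} {a : α} (hw : w ∈ L) (ha : a ∈ w) :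
    a ∈ alphabetOf L := by
  obtain ⟨u, v, rfl⟩ := List.append_of_mem ha
  exact ⟨u, v, by simpa using hw⟩

theorem alphabetOf_subset {L : Language α} {S : Set α} (h : ∀ w ∈ L, w ∈ starOf S) :
    alphabetOf L ⊆ S :=
  fun _ ⟨_, _, huv⟩ => h _ huv _ (by simp)

theorem alphabetOf_mono {X Y : Language α} (h : X ≤ Y) : alphabetOf X ⊆ alphabetOf Y :=
  fun _ ⟨u, v, huv⟩ => ⟨u, v, h huv⟩

theorem alphabetOf_sup (X Y : Language α) : alphabetOf (X ⊔ Y) = alphabetOf X ∪ alphabetOf Y := by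
  ext a
  constructor
  · rintro ⟨u, v, hX | hY⟩
    exacts [Or.inl ⟨u, v, hX⟩, Or.inr ⟨u, v, hY⟩]
  · rintro (ha | ha)
    exacts [alphabetOf_mono le_sup_left ha, alphabetOf_mono le_sup_right ha]

theorem hasComplexity_of_leftQuotient_eq {ι : Type*} {Z : Language α} (state : List α → ι)
    (f : ι → Language α) (P : Finset ι) (hZ : ∀ w, leftQuotient Z w = f (state w))
    (hP : ∀ p, p ∈ P ↔ ∃ w ∈ starOf (alphabetOf Z), state w = p) (hf : Set.InjOn f P) :
    HasComplexity Z P.card := by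
  have hq : quotientSet Z = f '' P := by
    ext K
    constructor
    · rintro ⟨w, hw, rfl⟩
      exact ⟨state w, (hP _).2 ⟨w, hw, rfl⟩, (hZ w).symm⟩
    · rintro ⟨p, hp, rfl⟩
      obtain ⟨w, hw, rfl⟩ := (hP p).1 hp
      exact ⟨w, hw, (hZ w).symm⟩
  rw [HasComplexity, hq, hf.ncard_image, Set.ncard_coe_finset]
  exact ⟨P.finite_toSet.image f, rfl⟩

end Languages

section Counter

variable {α : Type*} [BEq α] {S : Set α} {a : α} {M : ℕ}

/-- The quotients of `counterLang S a M M`: an index `r ≤ M` is the number of occurrences of `a`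
still needed, and `M + 1` stands for the empty quotient. -/
def counterLang (S : Set α) (a : α) (M r : ℕ) : Language α :=
  {x | r ≤ M ∧ x ∈ starOf S ∧ r ≤ x.count a}

open Classical in
noncomputable def counterState (S : Set α) (a : α) (M : ℕ) (w : List α) : ℕ :=
  if w ∈ starOf S then M - w.count a else M + 1

theorem mem_counterLang {r : ℕ} {x : List α} :
    x ∈ counterLang S a M r ↔ r ≤ M ∧ x ∈ starOf S ∧ r ≤ x.count a :=
  Iff.rfl

theorem counterState_of_mem {w : List α} (hw : w ∈ starOf S) :
    counterState S a M w = M - w.count a :=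
  if_pos hw

theorem counterState_of_not_mem {w : List α} (hw : w ∉ starOf S) :
    counterState S a M w = M + 1 :=
  if_neg hw

theorem counterState_le_iff [LawfulBEq α] {w : List α} :
    counterState S a M w ≤ M ↔ w ∈ starOf S := by
  by_cases hw : w ∈ starOf S
  · simp [counterState_of_mem hw, hw]
  · simp [counterState_of_not_mem hw, hw]

theorem counterState_le_succ (w : List α) : counterState S a M w ≤ M + 1 := by
  by_cases hw : w ∈ starOf S
  · rw [counterState_of_mem hw]; omega
  · rw [counterState_of_not_mem hw]

theorem leftQuotient_counterLang [LawfulBEq α] (w : List α) :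
    leftQuotient (counterLang S a M M) w = counterLang S a M (counterState S a M w) := by
  ext x
  by_cases hw : w ∈ starOf S
  · simp only [leftQuotient, counterState_of_mem hw, mem_counterLang, append_mem_starOf, hw,
      true_and, List.count_append]
    exact ⟨fun ⟨_, hx, hc⟩ => ⟨by omega, hx, by omega⟩, fun ⟨_, hx, hc⟩ => ⟨le_rfl, hx, by omega⟩⟩
  · simp only [leftQuotient, counterState_of_not_mem hw, mem_counterLang, append_mem_starOf, hw,
      false_and, and_false]
    exact iff_of_false id fun h => absurd h.1 (by omega)

theorem replicate_mem_counterLang [LawfulBEq α] {u v : List α} (ha : a ∈ S) (hu : u ∈ starOf S)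
    (hv : v ∈ starOf S) (hua : u.count a = 0) (hva : v.count a = 0) (i r : ℕ) :
    u ++ List.replicate i a ++ v ∈ counterLang S a M r ↔ r ≤ M ∧ r ≤ i := by
  have hw : u ++ List.replicate i a ++ v ∈ starOf S :=
    append_mem_starOf.2 ⟨append_mem_starOf.2 ⟨hu, replicate_mem_starOf ha i⟩, hv⟩
  simp only [mem_counterLang, hw, true_and, List.count_append, List.count_replicate_self, hua, hva,
    zero_add, add_zero]

theorem alphabetOf_counterLang [LawfulBEq α] (ha : a ∈ S) :
    alphabetOf (counterLang S a M M) = S := by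
  refine (alphabetOf_subset fun _ hw => hw.2.1).antisymm fun x hx => ?_
  have hmem : [x] ++ List.replicate M a ∈ counterLang S a M M := by
    refine ⟨le_rfl, append_mem_starOf.2 ⟨by simpa using hx, replicate_mem_starOf ha M⟩, ?_⟩
    simp only [List.count_append, List.count_replicate_self]
    omega
  exact mem_alphabetOf_of_mem hmem (by simp)

theorem isLeftIdeal_counterLang [LawfulBEq α] (ha : a ∈ S) :
    IsLeftIdeal (counterLang S a M M) := by
  refine ⟨⟨[] ++ List.replicate M a ++ [],
    (replicate_mem_counterLang ha (by simp) (by simp) rfl rfl M M).2 ⟨le_rfl, le_rfl⟩⟩, ?_⟩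
  rw [alphabetOf_counterLang ha]
  ext w
  rw [Language.mem_mul]
  constructor
  · rintro ⟨u, hu, v, ⟨-, hv, hva⟩, rfl⟩
    refine ⟨le_rfl, append_mem_starOf.2 ⟨hu, hv⟩, ?_⟩
    rw [List.count_append]
    omega
  · exact fun hw => ⟨[], by simp, w, hw, rfl⟩

theorem alphabetOf_counterLang_sdiff [LawfulBEq α] {c : α} {Y : Language α} (ha : a ∈ S)
    (hc : c ∈ S) (hcY : c ∉ alphabetOf Y) :
    alphabetOf (counterLang S a M M \ Y) = S := by
  refine (alphabetOf_counterLang ha ▸ alphabetOf_mono sdiff_le).antisymm fun x hx => ?_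
  have hw : [x, c] ++ List.replicate M a ∈ counterLang S a M M := by
    refine ⟨le_rfl, append_mem_starOf.2 ⟨by simp [hx, hc], replicate_mem_starOf ha M⟩, ?_⟩
    simp only [List.count_append, List.count_replicate_self]
    omega
  exact mem_alphabetOf_of_mem (L := counterLang S a M M \ Y)
    ⟨hw, fun hY => hcY (mem_alphabetOf_of_mem hY (by simp))⟩ (by simp)

theorem hasComplexity_counterLang [LawfulBEq α] (ha : a ∈ S) :
    HasComplexity (counterLang S a M M) (M + 1) := by
  rw [← Nat.card_Iic M]
  refine hasComplexity_of_leftQuotient_eq (counterState S a M) (counterLang S a M) _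
    leftQuotient_counterLang (fun r => ?_) fun r hr r' hr' h => ?_
  · rw [alphabetOf_counterLang ha, Finset.mem_Iic]
    refine ⟨fun hr => ⟨List.replicate (M - r) a, replicate_mem_starOf ha _, ?_⟩, ?_⟩
    · rw [counterState_of_mem (replicate_mem_starOf ha _), List.count_replicate_self]
      omega
    · rintro ⟨w, hw, rfl⟩
      exact counterState_le_iff.2 hw
  · simp only [Finset.coe_Iic, Set.mem_Iic] at hr hr'
    refine eq_of_forall_le_and_le_iff (M := M) (by omega) (by omega) fun i => ?_
    have hi := replicate_mem_counterLang (M := M) (u := []) (v := []) ha (by simp) (by simp)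
      rfl rfl i
    rw [← hi, ← hi, h]

theorem alphabetOf_counterLang_inf {T : Set α} {b : α} {N : ℕ} [LawfulBEq α] (haS : a ∈ S)
    (haT : a ∈ T) (hbS : b ∈ S) (hbT : b ∈ T) :
    alphabetOf (counterLang S a M M ⊓ counterLang T b N N) = S ∩ T := by
  refine (alphabetOf_subset (S := S ∩ T) fun w hw x hx =>
    ⟨hw.1.2.1 x hx, hw.2.2.1 x hx⟩).antisymm fun x hx => ?_
  have hw : [x] ++ List.replicate M a ++ List.replicate N b ∈ starOf (S ∩ T) := by
    refine append_mem_starOf.2 ⟨append_mem_starOf.2 ⟨by simpa using hx, ?_⟩, ?_⟩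
    exacts [replicate_mem_starOf (S := S ∩ T) ⟨haS, haT⟩ M,
      replicate_mem_starOf (S := S ∩ T) ⟨hbS, hbT⟩ N]
  have hmem : [x] ++ List.replicate M a ++ List.replicate N b ∈
      counterLang S a M M ⊓ counterLang T b N N := by
    refine Language.mem_inf.2 ⟨⟨le_rfl, fun y hy => (hw y hy).1, ?_⟩,
      ⟨le_rfl, fun y hy => (hw y hy).2, ?_⟩⟩ <;>
    · simp only [List.count_append, List.count_replicate_self]
      omega
  exact mem_alphabetOf_of_mem hmem (by simp)

end Counter

local notation "A₁" => ({0, 1, 2} : Set (Fin 5))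
local notation "A₂" => ({0, 1, 3} : Set (Fin 5))

noncomputable def pairState (M N : ℕ) (w : List (Fin 5)) : ℕ × ℕ :=
  (counterState A₁ 0 M w, counterState A₂ 1 N w)

theorem exists_pairState_eq {M N s t : ℕ} (hs : s ≤ M + 1) (ht : t ≤ N + 1) :
    ∃ w ∈ starOf (A₁ ∪ A₂), (s ≤ M → w ∈ starOf A₁) ∧ (t ≤ N → w ∈ starOf A₂) ∧
      pairState M N w = (s, t) := by
  rcases Nat.lt_or_ge M s with hsM | hsM <;> rcases Nat.lt_or_ge N t with htN | htN
  · refine ⟨[2, 3], by simp, by omega, by omega, ?_⟩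
    rw [pairState, counterState_of_not_mem (by simp), counterState_of_not_mem (by simp)]
    congr <;> omega
  · refine ⟨List.replicate (N - t) 1 ++ [3], by simp; grind, by omega, fun _ => by simp; grind, ?_⟩
    rw [pairState, counterState_of_not_mem (by simp), counterState_of_mem (by simp; grind)]
    simp
    omega
  · refine ⟨List.replicate (M - s) 0 ++ [2], by simp; grind, fun _ => by simp; grind, by omega, ?_⟩
    rw [pairState, counterState_of_mem (by simp; grind), counterState_of_not_mem (by simp)]
    simp
    omega
  · refine ⟨List.replicate (M - s) 0 ++ List.replicate (N - t) 1,
      by simp; grind, fun _ => by simp; grind, fun _ => by simp; grind, ?_⟩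
    rw [pairState, counterState_of_mem (by simp; grind), counterState_of_mem (by simp; grind)]
    simp [List.count_replicate]
    omega

section PairState

variable {M N : ℕ}

theorem mem_Iic_prod_Iic_iff_union (p : ℕ × ℕ) :
    p ∈ Finset.Iic (M + 1) ×ˢ Finset.Iic (N + 1) ↔
      ∃ w ∈ starOf (A₁ ∪ A₂), pairState M N w = p := by
  rw [Finset.mem_product, Finset.mem_Iic, Finset.mem_Iic]
  refine ⟨fun ⟨hs, ht⟩ => ?_, ?_⟩
  · obtain ⟨w, hw, -, -, hp⟩ := exists_pairState_eq hs ht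
    exact ⟨w, hw, hp⟩
  · rintro ⟨w, -, rfl⟩
    exact ⟨counterState_le_succ w, counterState_le_succ w⟩

theorem mem_Iic_prod_Iic_iff_left (p : ℕ × ℕ) :
    p ∈ Finset.Iic M ×ˢ Finset.Iic (N + 1) ↔ ∃ w ∈ starOf A₁, pairState M N w = p := by
  rw [Finset.mem_product, Finset.mem_Iic, Finset.mem_Iic]
  refine ⟨fun ⟨hs, ht⟩ => ?_, ?_⟩
  · obtain ⟨w, -, hw, -, hp⟩ := exists_pairState_eq (Nat.le_succ_of_le hs) ht
    exact ⟨w, hw hs, hp⟩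
  · rintro ⟨w, hw, rfl⟩
    exact ⟨counterState_le_iff.2 hw, counterState_le_succ w⟩

theorem mem_Iic_prod_Iic_iff_inter (p : ℕ × ℕ) :
    p ∈ Finset.Iic M ×ˢ Finset.Iic N ↔ ∃ w ∈ starOf (A₁ ∩ A₂), pairState M N w = p := by
  rw [Finset.mem_product, Finset.mem_Iic, Finset.mem_Iic]
  refine ⟨fun ⟨hs, ht⟩ => ?_, ?_⟩
  · obtain ⟨w, -, hw₁, hw₂, hp⟩ :=
      exists_pairState_eq (Nat.le_succ_of_le hs) (Nat.le_succ_of_le ht)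
    exact ⟨w, fun x hx => ⟨hw₁ hs x hx, hw₂ ht x hx⟩, hp⟩
  · rintro ⟨w, hw, rfl⟩
    exact ⟨counterState_le_iff.2 fun x hx => (hw x hx).1,
      counterState_le_iff.2 fun x hx => (hw x hx).2⟩

variable {op : Language (Fin 5) → Language (Fin 5) → Language (Fin 5)} {s s' t t' : ℕ}

theorem replicate_append_replicate_mem₁ (i j r : ℕ) :
    List.replicate i 0 ++ List.replicate j 1 ∈ counterLang A₁ 0 M r ↔ r ≤ M ∧ r ≤ i := by
  simpa using replicate_mem_counterLang (S := A₁) (a := 0) (M := M) (u := [])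
    (v := List.replicate j 1) (by simp) (by simp) (replicate_mem_starOf (by simp) j) rfl
    (by simp [List.count_replicate]) i r

theorem replicate_append_replicate_mem₂ (i j r : ℕ) :
    List.replicate i 0 ++ List.replicate j 1 ∈ counterLang A₂ 1 N r ↔ r ≤ N ∧ r ≤ j := by
  simpa using replicate_mem_counterLang (S := A₂) (a := 1) (M := N) (u := List.replicate i 0)
    (v := []) (by simp) (replicate_mem_starOf (by simp) i) (by simp)
    (by simp [List.count_replicate]) rfl j r

theorem fst_eq_of_op_eq (hop : ∀ X Y x, x ∉ Y → (x ∈ op X Y ↔ x ∈ X)) (hs : s ≤ M + 1)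
    (hs' : s' ≤ M + 1)
    (h : op (counterLang A₁ 0 M s) (counterLang A₂ 1 N t) =
      op (counterLang A₁ 0 M s') (counterLang A₂ 1 N t')) :
    s = s' := by
  refine eq_of_forall_le_and_le_iff hs hs' fun i => ?_
  have hi := replicate_mem_counterLang (S := A₁) (a := 0) (M := M) (u := []) (v := [2]) (by simp)
    (by simp) (by simp) rfl rfl i
  have hG : ∀ r, [] ++ List.replicate i 0 ++ [2] ∉ counterLang A₂ 1 N r :=
    fun r hx => absurd (hx.2.1 2 (by simp)) (by simp)
  rw [← hi, ← hi]
  exact ((hop _ _ _ (hG t)).symm.trans (by rw [h])).trans (hop _ _ _ (hG t'))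

theorem snd_eq_of_op_eq (hop : ∀ X Y x, x ∉ X → (x ∈ op X Y ↔ x ∈ Y)) (ht : t ≤ N + 1)
    (ht' : t' ≤ N + 1)
    (h : op (counterLang A₁ 0 M s) (counterLang A₂ 1 N t) =
      op (counterLang A₁ 0 M s') (counterLang A₂ 1 N t')) :
    t = t' := by
  refine eq_of_forall_le_and_le_iff ht ht' fun j => ?_
  have hj := replicate_mem_counterLang (S := A₂) (a := 1) (M := N) (u := []) (v := [3]) (by simp)
    (by simp) (by simp) rfl rfl j
  have hF : ∀ r, [] ++ List.replicate j 1 ++ [3] ∉ counterLang A₁ 0 M r :=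
    fun r hx => absurd (hx.2.1 3 (by simp)) (by simp)
  rw [← hj, ← hj]
  exact ((hop _ _ _ (hF s)).symm.trans (by rw [h])).trans (hop _ _ _ (hF s'))

theorem injOn_op (hop₁ : ∀ X Y x, x ∉ Y → (x ∈ op X Y ↔ x ∈ X))
    (hop₂ : ∀ X Y x, x ∉ X → (x ∈ op X Y ↔ x ∈ Y)) :
    Set.InjOn (fun p : ℕ × ℕ => op (counterLang A₁ 0 M p.1) (counterLang A₂ 1 N p.2))
      ↑(Finset.Iic (M + 1) ×ˢ Finset.Iic (N + 1)) := by
  rintro ⟨s, t⟩ hst ⟨s', t'⟩ hst' h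
  simp only [Finset.coe_product, Finset.coe_Iic, Set.mem_prod, Set.mem_Iic] at hst hst'
  exact Prod.ext (fst_eq_of_op_eq hop₁ hst.1 hst'.1 h) (snd_eq_of_op_eq hop₂ hst.2 hst'.2 h)

theorem injOn_sdiff :
    Set.InjOn (fun p : ℕ × ℕ => counterLang A₁ 0 M p.1 \ counterLang A₂ 1 N p.2)
      ↑(Finset.Iic M ×ˢ Finset.Iic (N + 1)) := by
  rintro ⟨s, t⟩ hst ⟨s', t'⟩ hst' h
  simp only [Finset.coe_product, Finset.coe_Iic, Set.mem_prod, Set.mem_Iic] at hst hst'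
  dsimp only at h
  obtain rfl := fst_eq_of_op_eq (op := (· \ ·)) (fun _ _ _ hx => and_iff_left hx)
    (Nat.le_succ_of_le hst.1) (Nat.le_succ_of_le hst'.1) h
  refine Prod.ext rfl (eq_of_forall_le_and_le_iff hst.2 hst'.2 fun j => ?_)
  have hF := (replicate_append_replicate_mem₁ M j s).2 ⟨hst.1, hst.1⟩
  have hj : ∀ t, List.replicate M 0 ++ List.replicate j 1 ∈
      counterLang A₁ 0 M s \ counterLang A₂ 1 N t ↔ ¬(t ≤ N ∧ t ≤ j) := fun t => by
    rw [Language.mem_sdiff, and_iff_right hF, replicate_append_replicate_mem₂]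
  rw [← not_iff_not, ← hj, ← hj, h]

theorem injOn_inf :
    Set.InjOn (fun p : ℕ × ℕ => counterLang A₁ 0 M p.1 ⊓ counterLang A₂ 1 N p.2)
      ↑(Finset.Iic M ×ˢ Finset.Iic N) := by
  rintro ⟨s, t⟩ hst ⟨s', t'⟩ hst' h
  simp only [Finset.coe_product, Finset.coe_Iic, Set.mem_prod, Set.mem_Iic] at hst hst'
  dsimp only at h
  have hmem : ∀ i j s t, List.replicate i 0 ++ List.replicate j 1 ∈
      counterLang A₁ 0 M s ⊓ counterLang A₂ 1 N t ↔ (s ≤ M ∧ s ≤ i) ∧ (t ≤ N ∧ t ≤ j) :=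
    fun i j s t => by
      rw [Language.mem_inf, replicate_append_replicate_mem₁, replicate_append_replicate_mem₂]
  have h₁ := (hmem s t s' t').1 (h ▸ (hmem s t s t).2 ⟨⟨hst.1, le_rfl⟩, hst.2, le_rfl⟩)
  have h₂ :=
    (hmem s' t' s t).1 (h.symm ▸ (hmem s' t' s' t').2 ⟨⟨hst'.1, le_rfl⟩, hst'.2, le_rfl⟩)
  exact Prod.ext (by omega) (by omega)

end PairState

section Operations

variable {M N : ℕ} {op : Language (Fin 5) → Language (Fin 5) → Language (Fin 5)}

theorem hasComplexity_op
    (hop : ∀ X Y w, leftQuotient (op X Y) w = op (leftQuotient X w) (leftQuotient Y w))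
    (P : Finset (ℕ × ℕ))
    (hP : ∀ p, p ∈ P ↔ ∃ w ∈ starOf (alphabetOf (op (counterLang A₁ 0 M M)
      (counterLang A₂ 1 N N))), pairState M N w = p)
    (hf : Set.InjOn (fun p : ℕ × ℕ => op (counterLang A₁ 0 M p.1) (counterLang A₂ 1 N p.2)) P) :
    HasComplexity (op (counterLang A₁ 0 M M) (counterLang A₂ 1 N N)) P.card :=
  hasComplexity_of_leftQuotient_eq (pairState M N) _ P
    (fun w => by rw [hop, leftQuotient_counterLang, leftQuotient_counterLang]; rfl) hP hf

theorem hasComplexity_sup :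
    HasComplexity (counterLang A₁ 0 M M ⊔ counterLang A₂ 1 N N) ((M + 2) * (N + 2)) := by
  have h := hasComplexity_op (M := M) (N := N) (op := (· ⊔ ·)) (fun _ _ _ => rfl) _
    (fun p => by
      rw [alphabetOf_sup, alphabetOf_counterLang (by simp), alphabetOf_counterLang (by simp)]
      exact mem_Iic_prod_Iic_iff_union p)
    (injOn_op (fun _ _ _ hx => or_iff_left hx) fun _ _ _ hx => or_iff_right hx)
  simpa using h

theorem hasComplexity_symmDiff :
    HasComplexity ((counterLang A₁ 0 M M \ counterLang A₂ 1 N N) ⊔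
      (counterLang A₂ 1 N N \ counterLang A₁ 0 M M)) ((M + 2) * (N + 2)) := by
  have hA₁ : (2 : Fin 5) ∉ alphabetOf (counterLang A₂ 1 N N) := by
    simp [alphabetOf_counterLang]
  have hA₂ : (3 : Fin 5) ∉ alphabetOf (counterLang A₁ 0 M M) := by
    simp [alphabetOf_counterLang]
  have h := hasComplexity_op (M := M) (N := N) (op := fun X Y => X \ Y ⊔ Y \ X)
    (fun _ _ _ => rfl) _
    (fun p => by
      rw [alphabetOf_sup, alphabetOf_counterLang_sdiff (by simp) (by simp) hA₁,
        alphabetOf_counterLang_sdiff (by simp) (by simp) hA₂]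
      exact mem_Iic_prod_Iic_iff_union p)
    (injOn_op (op := fun X Y => X \ Y ⊔ Y \ X)
      (fun _ _ _ hx => by simp only [Language.mem_sdiff_sup_sdiff, hx]; tauto)
      fun _ _ _ hx => by simp only [Language.mem_sdiff_sup_sdiff, hx]; tauto)
  simpa using h

theorem hasComplexity_sdiff :
    HasComplexity (counterLang A₁ 0 M M \ counterLang A₂ 1 N N)
      ((M + 1) * (N + 1) + (M + 1)) := by
  have h := hasComplexity_op (M := M) (N := N) (op := (· \ ·)) (fun _ _ _ => rfl) _
    (fun p => by
      rw [alphabetOf_counterLang_sdiff (c := 2) (by simp) (by simp)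
        (by simp [alphabetOf_counterLang])]
      exact mem_Iic_prod_Iic_iff_left p)
    injOn_sdiff
  simpa [Nat.mul_succ] using h

theorem hasComplexity_inf :
    HasComplexity (counterLang A₁ 0 M M ⊓ counterLang A₂ 1 N N) ((M + 1) * (N + 1)) := by
  have h := hasComplexity_op (M := M) (N := N) (op := (· ⊓ ·)) (fun _ _ _ => rfl) _
    (fun p => by
      rw [alphabetOf_counterLang_inf (by simp) (by simp) (by simp) (by simp)]
      exact mem_Iic_prod_Iic_iff_inter p)
    injOn_inf
  simpa using h

end Operations

/-- left ideals meeting the unrestricted bounds for the boolean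
operations: `(m+1)(n+1)` for union and symmetric difference, `m·n + m` for
difference, and `m·n` for intersection. -/
theorem left_ideal_boolean_tight (m n : ℕ) (hm : 4 ≤ m) (hn : 4 ≤ n) :
    (∃ L' L : Language (Fin 5), IsLeftIdeal L' ∧ IsLeftIdeal L ∧
      (alphabetOf L' \ alphabetOf L).Nonempty ∧
      (alphabetOf L \ alphabetOf L').Nonempty ∧
      HasComplexity L' m ∧ HasComplexity L n ∧
      HasComplexity (L' ⊔ L) ((m + 1) * (n + 1)) ∧
      HasComplexity ((L' \ L) ⊔ (L \ L')) ((m + 1) * (n + 1))) ∧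
    (∃ L' L : Language (Fin 5), IsLeftIdeal L' ∧ IsLeftIdeal L ∧
      (alphabetOf L' \ alphabetOf L).Nonempty ∧
      HasComplexity L' m ∧ HasComplexity L n ∧
      HasComplexity (L' \ L) (m * n + m)) ∧
    (∃ L' L : Language (Fin 5), IsLeftIdeal L' ∧ IsLeftIdeal L ∧
      HasComplexity L' m ∧ HasComplexity L n ∧
      HasComplexity (L' ⊓ L) (m * n)) := by
  obtain ⟨M, rfl⟩ : ∃ M, m = M + 1 := ⟨m - 1, by omega⟩
  obtain ⟨N, rfl⟩ : ∃ N, n = N + 1 := ⟨n - 1, by omega⟩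
  have ideal₁ : IsLeftIdeal (counterLang A₁ 0 M M) := isLeftIdeal_counterLang (by simp)
  have ideal₂ : IsLeftIdeal (counterLang A₂ 1 N N) := isLeftIdeal_counterLang (by simp)
  have compl₁ : HasComplexity (counterLang A₁ 0 M M) (M + 1) := hasComplexity_counterLang (by simp)
  have compl₂ : HasComplexity (counterLang A₂ 1 N N) (N + 1) := hasComplexity_counterLang (by simp)
  have only₁ : (alphabetOf (counterLang A₁ 0 M M) \ alphabetOf (counterLang A₂ 1 N N)).Nonempty :=
    ⟨2, by simp [alphabetOf_counterLang]⟩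
  have only₂ : (alphabetOf (counterLang A₂ 1 N N) \ alphabetOf (counterLang A₁ 0 M M)).Nonempty :=
    ⟨3, by simp [alphabetOf_counterLang]⟩
  exact ⟨⟨_, _, ideal₁, ideal₂, only₁, only₂, compl₁, compl₂, hasComplexity_sup,
      hasComplexity_symmDiff⟩,
    ⟨_, _, ideal₁, ideal₂, only₁, compl₁, compl₂, hasComplexity_sdiff⟩,
    ⟨_, _, ideal₁, ideal₂, compl₁, compl₂, hasComplexity_inf⟩⟩
end
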